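/- arXiv:1905.04772 — 4 statements merged into one kernel-verified Lean document; each statement's English description precedes it below -/
import Mathlib

section
/- Let $q \ge 2$ be a prime power. Let $A_m$ be the $t^m$-coefficient of $\frac{1}{(1-t)(1-qt)(1-q^2t)}$ (the number of effective $0$-cycles of degree $m$ on $\mathbb{P}^2/\mathbb{F}_q$) and let $P_m = \frac{1}{m}\sum_{r\mid m}\mu(m/r)(q^{2r}+q^r+1)$ (the number of prime effective $0$-cycles of degree $m$). Then $\frac{P_m}{A_m} = \frac{1}{m}\left(1 - q^{-1} - q^{-2} + q^{-3}\right) + O\left(\frac{1}{m q^m}\right)$ as $m \to \infty$. -/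
/-!
Partial fractions give `A m = a + b q^m + c q^(2m)` with `c = K⁻¹`, where
`K = (1 - q⁻¹)(1 - q⁻²)`, so `K A m = q^(2m) + O(q^m)`. In the Möbius sum for `m P m` the divisor
`r = m` contributes `q^(2m)`, and every proper divisor is at most `m / 2`, so
`m P m = q^(2m) + O(q^m)` as well. Therefore
`P m / A m - K / m = K (m P m - K A m) / (m · K A m) = O(q^m / (m q^(2m)))`.
-/

open Finset Filter Asymptotics

namespace PowerSeries

theorem one_sub_C_mul_X_mul_mk_pow {R : Type*} [CommRing R] (r : R) :
    (1 - C r * X) * mk (r ^ ·) = 1 := by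
  ext (_ | n)
  · simp
  · rw [sub_mul, one_mul, mul_assoc, map_sub, coeff_C_mul, coeff_succ_X_mul]
    simp [pow_succ']

theorem coeff_eq_of_three_factors_mul_eq_one {K : Type*} [Field K] {α β γ : K}
    (hαβ : α ≠ β) (hαγ : α ≠ γ) (hβγ : β ≠ γ) {A : ℕ → K}
    (hA : (1 - C α * X) * (1 - C β * X) * (1 - C γ * X) * mk A = 1) (n : ℕ) :
    A n = α ^ 2 / ((α - β) * (α - γ)) * α ^ n + β ^ 2 / ((β - α) * (β - γ)) * β ^ n
      + γ ^ 2 / ((γ - α) * (γ - β)) * γ ^ n := by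
  set a := α ^ 2 / ((α - β) * (α - γ))
  set b := β ^ 2 / ((β - α) * (β - γ))
  set c := γ ^ 2 / ((γ - α) * (γ - β))
  have hαβ' := sub_ne_zero.2 hαβ
  have hαγ' := sub_ne_zero.2 hαγ
  have hβγ' := sub_ne_zero.2 hβγ
  have e₀ : a + b + c = 1 := by
    simp only [a, b, c]; field_simp; ring
  have e₁ : a * (β + γ) + b * (α + γ) + c * (α + β) = 0 := by
    simp only [a, b, c]; field_simp; ring
  have e₂ : a * β * γ + b * α * γ + c * α * β = 0 := by
    simp only [a, b, c]; field_simp; ring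
  have partial_fractions : C a * (1 - C β * X) * (1 - C γ * X) + C b * (1 - C α * X) * (1 - C γ * X)
      + C c * (1 - C α * X) * (1 - C β * X) = 1 := by
    calc _ = C (a + b + c) - C (a * (β + γ) + b * (α + γ) + c * (α + β)) * X
          + C (a * β * γ + b * α * γ + c * α * β) * X ^ 2 := by
          simp only [map_add, map_mul]; ring
      _ = 1 := by simp [e₀, e₁, e₂]
  have hinv : (1 - C α * X) * (1 - C β * X) * (1 - C γ * X) *
      (C a * mk (α ^ ·) + C b * mk (β ^ ·) + C c * mk (γ ^ ·)) = 1 := by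
    linear_combination C a * (1 - C β * X) * (1 - C γ * X) * one_sub_C_mul_X_mul_mk_pow α
      + C b * (1 - C α * X) * (1 - C γ * X) * one_sub_C_mul_X_mul_mk_pow β
      + C c * (1 - C α * X) * (1 - C β * X) * one_sub_C_mul_X_mul_mk_pow γ + partial_fractions
  have hmk := left_inv_eq_right_inv (by rwa [mul_comm] at hA) hinv
  simpa using congrArg (coeff n) hmk

end PowerSeries

theorem geom_sum_le_pow_of_two_le {R : Type*} [CommRing R] [LinearOrder R] [IsStrictOrderedRing R]
    {x : R} (hx : 2 ≤ x) (k : ℕ) : ∑ j ∈ range k, x ^ j ≤ x ^ k := by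
  have hsum : (∑ j ∈ range k, x ^ j) * (x - 1) = x ^ k - 1 := geom_sum_mul x k
  have hnonneg : 0 ≤ ∑ j ∈ range k, x ^ j := sum_nonneg fun j _ => pow_nonneg (by linarith) j
  nlinarith

open ArithmeticFunction
open scoped ArithmeticFunction.Moebius

theorem Nat.le_div_two_of_mem_properDivisors {m r : ℕ} (hr : r ∈ m.properDivisors) : r ≤ m / 2 := by
  have h2 : 2 ≤ m / r := Nat.one_lt_div_of_mem_properDivisors hr
  rw [Nat.le_div_iff_mul_le two_pos]
  calc r * 2 ≤ r * (m / r) := Nat.mul_le_mul_left r h2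
    _ = m := Nat.mul_div_cancel' (Nat.mem_properDivisors.1 hr).1

theorem sum_divisors_moebius_div (m : ℕ) :
    ∑ r ∈ m.divisors, (μ (m / r) : ℝ) = if m = 1 then 1 else 0 := by
  rw [Nat.sum_div_divisors m (fun d => (μ d : ℝ))]
  have h := congrArg (· m) (coe_moebius_mul_coe_zeta (R := ℝ))
  simp only [coe_mul_zeta_apply, one_apply, intCoe_apply] at h
  exact h

theorem abs_sum_divisors_moebius_mul_pow_sub_pow_le {x : ℝ} (hx : 2 ≤ x) {m : ℕ} (hm : m ≠ 0) :
    |∑ r ∈ m.divisors, (μ (m / r) : ℝ) * x ^ r - x ^ m| ≤ x ^ (m / 2 + 1) := by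
  rw [← Nat.cons_self_properDivisors hm, sum_cons, Nat.div_self (Nat.pos_of_ne_zero hm),
    moebius_apply_one, Int.cast_one, one_mul, add_sub_cancel_left]
  calc |∑ r ∈ m.properDivisors, (μ (m / r) : ℝ) * x ^ r|
      ≤ ∑ r ∈ m.properDivisors, |(μ (m / r) : ℝ) * x ^ r| := abs_sum_le_sum_abs _ _
    _ ≤ ∑ r ∈ m.properDivisors, x ^ r := by
        gcongr with r
        rw [abs_mul, abs_of_nonneg (by positivity : (0 : ℝ) ≤ x ^ r)]
        exact mul_le_of_le_one_left (by positivity) (mod_cast abs_moebius_le_one)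
    _ ≤ ∑ j ∈ range (m / 2 + 1), x ^ j :=
        sum_le_sum_of_subset_of_nonneg
          (fun r hr => mem_range.2 (Nat.lt_succ_of_le (Nat.le_div_two_of_mem_properDivisors hr)))
          (fun j _ _ => by positivity)
    _ ≤ x ^ (m / 2 + 1) := geom_sum_le_pow_of_two_le hx _

theorem isBigO_sum_divisors_moebius_mul_pow_sub_pow {x : ℝ} (hx : 2 ≤ x) :
    (fun m : ℕ => ∑ r ∈ m.divisors, (μ (m / r) : ℝ) * x ^ r - x ^ m) =O[atTop] (√x ^ ·) := by
  refine IsBigO.of_bound x ?_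
  filter_upwards [eventually_ne_atTop 0] with m hm
  have hsqrt : 1 ≤ √x := Real.one_le_sqrt.2 (by linarith)
  rw [Real.norm_eq_abs, Real.norm_of_nonneg (by positivity)]
  calc _ ≤ x ^ (m / 2 + 1) := abs_sum_divisors_moebius_mul_pow_sub_pow_le hx hm
    _ = x * √x ^ (2 * (m / 2)) := by
        rw [pow_succ', pow_mul, Real.sq_sqrt (by linarith)]
    _ ≤ x * √x ^ m := by gcongr; exact Nat.mul_div_le m 2

theorem isBigO_sum_divisors_moebius_mul_sub_pow {q : ℝ} (hq : 2 ≤ q) :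
    (fun m : ℕ => ∑ r ∈ m.divisors, (μ (m / r) : ℝ) * (q ^ (2 * r) + q ^ r + 1) - q ^ (2 * m))
      =O[atTop] (q ^ ·) := by
  have hsplit : (fun m : ℕ => ∑ r ∈ m.divisors, (μ (m / r) : ℝ) * (q ^ (2 * r) + q ^ r + 1)
      - q ^ (2 * m)) = fun m => (∑ r ∈ m.divisors, (μ (m / r) : ℝ) * (q ^ 2) ^ r - (q ^ 2) ^ m)
        + ((∑ r ∈ m.divisors, (μ (m / r) : ℝ) * q ^ r - q ^ m) + q ^ m)
        + ∑ r ∈ m.divisors, (μ (m / r) : ℝ) := by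
    ext m
    simp only [← pow_mul, mul_add, sum_add_distrib, mul_one]
    ring
  have hsqrt_sq : (√(q ^ 2) ^ ·) =O[atTop] (q ^ · : ℕ → ℝ) := by
    rw [Real.sqrt_sq (by linarith)]
  have hsqrt : (√q ^ ·) =O[atTop] (q ^ · : ℕ → ℝ) :=
    isBigO_pow_pow_of_le_left (Real.sqrt_nonneg q)
      (Real.sqrt_le_self_iff.2 (Or.inr (by linarith)))
  have hconst : (fun m : ℕ => ∑ r ∈ m.divisors, (μ (m / r) : ℝ)) =O[atTop] (q ^ ·) := by
    refine IsBigO.of_bound' (Eventually.of_forall fun m => ?_)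
    rw [sum_divisors_moebius_div]
    have hq0 : 0 ≤ q := by linarith
    split_ifs <;> simp [abs_of_nonneg hq0, one_le_pow₀ (by linarith : (1 : ℝ) ≤ q), pow_nonneg hq0]
  rw [hsplit]
  exact (((isBigO_sum_divisors_moebius_mul_pow_sub_pow (by nlinarith)).trans hsqrt_sq).add
    (((isBigO_sum_divisors_moebius_mul_pow_sub_pow hq).trans hsqrt).add (isBigO_refl _ _))).add hconst

theorem isBigO_mul_coeff_sub_pow {q : ℝ} (hq : 2 ≤ q) {A : ℕ → ℝ}
    (hA : ((1 - PowerSeries.X) * (1 - PowerSeries.C q * PowerSeries.X) *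
        (1 - PowerSeries.C (q ^ 2) * PowerSeries.X)) * PowerSeries.mk A = 1) :
    (fun m : ℕ => (1 - q⁻¹ - q⁻¹ ^ 2 + q⁻¹ ^ 3) * A m - q ^ (2 * m)) =O[atTop] (q ^ ·) := by
  have hq0 : q ≠ 0 := by positivity
  have hq1 : q - 1 ≠ 0 := by linarith
  have h1q : 1 - q ≠ 0 := by linarith
  have h1q2 : 1 - q ^ 2 ≠ 0 := by nlinarith
  have hqq2 : q - q ^ 2 ≠ 0 := by nlinarith
  have hq21 : q ^ 2 - 1 ≠ 0 := by nlinarith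
  have hcoeff := PowerSeries.coeff_eq_of_three_factors_mul_eq_one (sub_ne_zero.1 h1q)
    (sub_ne_zero.1 h1q2) (sub_ne_zero.1 hqq2) (by rwa [map_one, one_mul])
  set K := 1 - q⁻¹ - q⁻¹ ^ 2 + q⁻¹ ^ 3
  have hK : K = (q - 1) ^ 2 * (q + 1) / q ^ 3 := by
    simp only [K]; field_simp; ring
  set a := K * (1 / ((1 - q) * (1 - q ^ 2)))
  set b := K * (q ^ 2 / ((q - 1) * (q - q ^ 2)))
  -- the coefficient of `(q ^ 2) ^ m` in `A m` is exactly `K⁻¹`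
  have hKA : ∀ m, K * A m - q ^ (2 * m) = a + b * q ^ m := by
    intro m
    rw [hcoeff m]
    simp only [hK, a, b]
    field_simp
    ring
  refine IsBigO.of_bound (|a| + |b|) (Eventually.of_forall fun m => ?_)
  have hqm : 1 ≤ q ^ m := one_le_pow₀ (by linarith)
  rw [hKA, Real.norm_eq_abs, Real.norm_of_nonneg (by positivity)]
  calc |a + b * q ^ m| ≤ |a| + |b| * q ^ m := by
        simpa [abs_of_pos (by positivity : 0 < q)] using abs_add_le a (b * q ^ m)
    _ ≤ (|a| + |b|) * q ^ m := by nlinarith [abs_nonneg a]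

/-- Theorem 5.5 analogue over `𝔽_q`: with `A m` the number of effective 0-cycles of degree
`m` on `ℙ²/𝔽_q` (the `t^m`-coefficient of `1/((1-t)(1-qt)(1-q²t))`) and
`P m = (1/m) ∑_{r ∣ m} μ(m/r) (q^{2r} + q^r + 1)` the number of prime effective 0-cycles,
`P m / A m = (1/m)(1 - q⁻¹ - q⁻² + q⁻³) + O(1/(m q^m))` as `m → ∞`. -/
theorem stmt6 (q : ℝ) (hpp : ∃ p n : ℕ, p.Prime ∧ 0 < n ∧ q = (p : ℝ) ^ n)
    (A : ℕ → ℝ)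
    (hA : ((1 - PowerSeries.X) * (1 - PowerSeries.C (R := ℝ) q * PowerSeries.X) *
        (1 - PowerSeries.C (R := ℝ) (q ^ 2) * PowerSeries.X)) * PowerSeries.mk A = 1)
    (P : ℕ → ℝ)
    (hP : ∀ m : ℕ, 1 ≤ m →
      P m = (1 / m) * ∑ r ∈ m.divisors,
        ((ArithmeticFunction.moebius (m / r) : ℤ) : ℝ) * (q ^ (2 * r) + q ^ r + 1)) :
    (fun m : ℕ => P m / A m - (1 / m) * (1 - q⁻¹ - q⁻¹ ^ 2 + q⁻¹ ^ 3))
      =O[atTop] (fun m : ℕ => 1 / (m * q ^ m)) := by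
  have hq : 2 ≤ q := by
    obtain ⟨p, n, hp, hn, rfl⟩ := hpp
    exact_mod_cast hp.two_le.trans (Nat.le_self_pow hn.ne' p)
  have hKA := isBigO_mul_coeff_sub_pow hq hA
  have hN := isBigO_sum_divisors_moebius_mul_sub_pow hq
  set K := 1 - q⁻¹ - q⁻¹ ^ 2 + q⁻¹ ^ 3
  have hKA_equiv : (fun m => K * A m) ~[atTop] (fun m : ℕ => q ^ (2 * m)) := by
    refine hKA.trans_isLittleO ?_
    simpa [pow_mul] using isLittleO_pow_pow_of_lt_left (by linarith) (by nlinarith : q < q ^ 2)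
  have hpos := hKA_equiv.eventually_pos (Eventually.of_forall fun m => by positivity)
  have hden : (fun m : ℕ => (m * (K * A m))⁻¹) =O[atTop] (fun m : ℕ => (m * q ^ (2 * m))⁻¹) :=
    ((IsEquivalent.refl.mul hKA_equiv).inv).isBigO
  refine (((hN.sub hKA).mul hden).const_mul_left K).congr' ?_ (Eventually.of_forall fun m => ?_)
  · filter_upwards [hpos, eventually_ne_atTop 0] with m hm hm0
    rw [hP m (Nat.one_le_iff_ne_zero.2 hm0)]
    have hK : K ≠ 0 := left_ne_zero_of_mul hm.ne'
    have hAm : A m ≠ 0 := right_ne_zero_of_mul hm.ne'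
    field_simp
    ring
  · have hq0 : q ≠ 0 := by positivity
    field_simp
    ring
end

section
/- Let $q > 1$ be a real number and $r_V, r_W \ge 1$ integers. Suppose $a_i \sim c_V\, q^i i^{r_V - 1}$ and $b_i \sim c_W\, q^i i^{r_W-1}$ as $i \to \infty$, with $c_V, c_W > 0$. Then $\sum_{i=0}^{M} a_i b_{M-i} \sim \frac{c_V c_W (r_V-1)!(r_W-1)!}{(r_V + r_W - 1)!} q^M M^{r_V + r_W - 1}$ as $M \to \infty$. -/
/-!
Write `f ⋆ g` for the Cauchy product. After dividing out `q ^ i` and the constants,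
`a i ~ i ^ s / s!` and `b i ~ i ^ t / t!` with `s = r_V - 1`, `t = r_W - 1`. Compare with the
binomial sequences `A i = (s + i).choose s` and `B i = (t + i).choose t`: their Cauchy product is
exactly `(s + t + 1 + n).choose (s + t + 1) ~ n ^ (s + t + 1) / (s + t + 1)!`.

The transfer from `A ⋆ B` to `a ⋆ b` works for any positive monotone `A`, `B` with
`A, B = o(A ⋆ B)`. Since `|b| ≤ K B`, the terms `i ≥ N` of `(a - A) ⋆ b` are at most `ε K`
times those of `A ⋆ B`, and each of the `N` terms `i < N` is `O(B n)` by monotonicity, hence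
`o(A ⋆ B)`; symmetrically for `A ⋆ (b - B)`.
-/

open Finset Filter Asymptotics

noncomputable def cauchyProduct (f g : ℕ → ℝ) (n : ℕ) : ℝ :=
  ∑ i ∈ range (n + 1), f i * g (n - i)

theorem cauchyProduct_comm (f g : ℕ → ℝ) : cauchyProduct f g = cauchyProduct g f := by
  funext n
  rw [cauchyProduct, ← sum_range_reflect]
  refine sum_congr rfl fun i hi => ?_
  rw [Nat.add_sub_cancel, Nat.sub_sub_self (Nat.lt_succ_iff.mp (mem_range.mp hi)), mul_comm]

theorem cauchyProduct_sub_left (f f' g : ℕ → ℝ) :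
    cauchyProduct (f - f') g = cauchyProduct f g - cauchyProduct f' g := by
  funext n
  simp only [cauchyProduct, Pi.sub_apply, sub_mul, sum_sub_distrib]

theorem cauchyProduct_nonneg {f g : ℕ → ℝ} (hf : 0 ≤ f) (hg : 0 ≤ g) :
    0 ≤ cauchyProduct f g :=
  fun _ => sum_nonneg fun i _ => mul_nonneg (hf i) (hg _)

theorem abs_cauchyProduct_le {f g F G : ℕ → ℝ} (hf : ∀ i, |f i| ≤ F i)
    (hg : ∀ j, |g j| ≤ G j) (n : ℕ) : |cauchyProduct f g n| ≤ cauchyProduct F G n := by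
  refine (abs_sum_le_sum_abs _ _).trans (sum_le_sum fun i _ => ?_)
  rw [abs_mul]
  exact mul_le_mul (hf i) (hg _) (abs_nonneg _) ((abs_nonneg _).trans (hf i))

theorem cauchyProduct_le_sum_mul_of_monotone {h B : ℕ → ℝ} {N : ℕ} (hh : 0 ≤ h)
    (hN : ∀ i, N ≤ i → h i = 0) (hB : Monotone B) (hB0 : 0 ≤ B) (n : ℕ) :
    cauchyProduct h B n ≤ (∑ i ∈ range N, h i) * B n := by
  have hsum : ∑ i ∈ range (n + 1), h i ≤ ∑ i ∈ range N, h i :=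
    (sum_le_sum_of_subset_of_nonneg (range_subset_range.2 (le_max_left _ N))
      fun i _ _ => hh i).trans_eq
    (sum_subset (range_subset_range.2 (le_max_right _ _))
      fun i _ hi => hN i (by simpa using hi)).symm
  calc cauchyProduct h B n ≤ ∑ i ∈ range (n + 1), h i * B n :=
        sum_le_sum fun i _ => mul_le_mul_of_nonneg_left (hB (Nat.sub_le n i)) (hh i)
    _ ≤ (∑ i ∈ range N, h i) * B n := by
        rw [← sum_mul]; exact mul_le_mul_of_nonneg_right hsum (hB0 n)

theorem abs_cauchyProduct_le_of_tail_le {f g A B : ℕ → ℝ} {δ K : ℝ} {N : ℕ}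
    (hA : 0 ≤ A) (hB : Monotone B) (hB0 : 0 ≤ B) (hδ : 0 ≤ δ) (hK : 0 ≤ K)
    (hf : ∀ i, N ≤ i → |f i| ≤ δ * A i) (hg : ∀ j, |g j| ≤ K * B j) (n : ℕ) :
    |cauchyProduct f g n| ≤
      δ * K * cauchyProduct A B n + K * (∑ i ∈ range N, |f i|) * B n := by
  set h : ℕ → ℝ := fun i => if i < N then |f i| else 0
  have hfh : ∀ i, |f i| ≤ δ * A i + h i := fun i => by
    by_cases hi : i < N
    · simpa [h, hi] using mul_nonneg hδ (hA i)
    · simpa [h, hi] using hf i (not_lt.mp hi)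
  have hhead : cauchyProduct h B n ≤ (∑ i ∈ range N, |f i|) * B n := by
    convert cauchyProduct_le_sum_mul_of_monotone (fun i => ?_) (fun i hi => ?_) hB hB0 n
      using 2
    · exact sum_congr rfl fun i hi => (if_pos (mem_range.1 hi)).symm
    · by_cases hi : i < N <;> simp [h, hi]
    · simp [h, not_lt.2 hi]
  calc |cauchyProduct f g n|
      ≤ cauchyProduct (fun i => δ * A i + h i) (fun j => K * B j) n :=
        abs_cauchyProduct_le hfh hg n
    _ = δ * K * cauchyProduct A B n + K * cauchyProduct h B n := by
        simp only [cauchyProduct, mul_sum, ← sum_add_distrib]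
        exact sum_congr rfl fun _ _ => by ring
    _ ≤ _ := by rw [mul_assoc K]; gcongr

theorem cauchyProduct_sub_cauchyProduct (f g A B : ℕ → ℝ) :
    cauchyProduct f g - cauchyProduct A B =
      cauchyProduct (f - A) g + cauchyProduct (g - B) A := by
  rw [cauchyProduct_sub_left, cauchyProduct_sub_left, cauchyProduct_comm B A,
    cauchyProduct_comm A g]
  ring

theorem Asymptotics.IsLittleO.cauchyProduct_isBigO {f g A B : ℕ → ℝ} (hf : f =o[atTop] A)
    (hg : g =O[atTop] B) (hA : 0 ≤ A) (hB : ∀ j, 0 < B j) (hBm : Monotone B)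
    (hBC : B =o[atTop] cauchyProduct A B) : cauchyProduct f g =o[atTop] cauchyProduct A B := by
  obtain ⟨K, hK, hgK⟩ := bound_of_isBigO_nat_atTop hg
  have hgB : ∀ j, |g j| ≤ K * B j := fun j => by
    simpa [abs_of_pos (hB j)] using hgK (hB j).ne'
  refine IsLittleO.of_bound fun ε hε => ?_
  obtain ⟨N, hN⟩ := eventually_atTop.1 (hf.def (div_pos (half_pos hε) hK))
  have hfA : ∀ i, N ≤ i → |f i| ≤ ε / 2 / K * A i := fun i hi => by
    simpa [abs_of_nonneg (hA i)] using hN i hi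
  filter_upwards [(hBC.const_mul_left (K * ∑ i ∈ range N, |f i|)).def (half_pos hε)] with n hn
  have hC := cauchyProduct_nonneg hA (fun j => (hB j).le) n
  simp only [Real.norm_eq_abs, abs_of_nonneg hC] at hn ⊢
  calc |cauchyProduct f g n|
      ≤ ε / 2 / K * K * cauchyProduct A B n + K * (∑ i ∈ range N, |f i|) * B n :=
        abs_cauchyProduct_le_of_tail_le hA hBm (fun j => (hB j).le) (by positivity) hK.le hfA
          hgB n
    _ ≤ ε / 2 * cauchyProduct A B n + ε / 2 * cauchyProduct A B n := by
        rw [div_mul_cancel₀ _ hK.ne']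
        exact add_le_add_right ((le_abs_self _).trans hn) _
    _ = ε * cauchyProduct A B n := by ring

theorem Asymptotics.IsEquivalent.cauchyProduct {f g A B : ℕ → ℝ} (hf : f ~[atTop] A)
    (hg : g ~[atTop] B) (hA : ∀ i, 0 < A i) (hB : ∀ j, 0 < B j) (hAm : Monotone A)
    (hBm : Monotone B) (hAC : A =o[atTop] cauchyProduct A B)
    (hBC : B =o[atTop] cauchyProduct A B) : cauchyProduct f g ~[atTop] cauchyProduct A B := by
  have hleft := hf.isLittleO.cauchyProduct_isBigO hg.isBigO (fun i => (hA i).le) hB hBm hBC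
  have hright := hg.isLittleO.cauchyProduct_isBigO (isBigO_refl A atTop) (fun j => (hB j).le) hA
    hAm (by rwa [cauchyProduct_comm])
  rw [cauchyProduct_comm B A] at hright
  refine IsLittleO.isEquivalent ?_
  rw [cauchyProduct_sub_cauchyProduct]
  exact hleft.add hright

/-- The generating function of `i ↦ (s + i).choose s` is `(1 - X)⁻¹ ^ (s + 1)`. -/
theorem cauchyProduct_choose_add (s t : ℕ) :
    cauchyProduct (fun i => ((s + i).choose s : ℝ)) (fun j => ((t + j).choose t : ℝ)) =
      fun n => ((s + t + 1 + n).choose (s + t + 1) : ℝ) := by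
  funext n
  have h := congrArg (PowerSeries.coeff n)
    (pow_add (PowerSeries.mk (1 : ℕ → ℝ)) (s + 1) (t + 1))
  rw [show s + 1 + (t + 1) = s + t + 1 + 1 by ring] at h
  simp only [PowerSeries.mk_one_pow_eq_mk_choose_add, PowerSeries.coeff_mul,
    PowerSeries.coeff_mk, Nat.sum_antidiagonal_eq_sum_range_succ_mk] at h
  exact h.symm

theorem isEquivalent_choose_add (c k : ℕ) :
    (fun n : ℕ => ((c + n).choose k : ℝ)) ~[atTop] fun n => (n : ℝ) ^ k / k.factorial := by
  have hshift : (fun n : ℕ => ((c + n : ℕ) : ℝ)) ~[atTop] fun n => (n : ℝ) := by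
    push_cast
    exact IsEquivalent.refl.const_add_of_norm_tendsto_atTop
      (tendsto_norm_atTop_atTop.comp tendsto_natCast_atTop_atTop)
  have hc : Tendsto (fun n => c + n) atTop atTop :=
    (tendsto_add_atTop_nat c).congr fun n => add_comm n c
  exact ((isEquivalent_choose k).comp_tendsto hc).trans ((hshift.pow k).div IsEquivalent.refl)

theorem isLittleO_pow_div_factorial {a b : ℕ} (hab : a < b) :
    (fun n : ℕ => (n : ℝ) ^ a / a.factorial) =o[atTop]
      fun n => (n : ℝ) ^ b / b.factorial := by
  simp only [div_eq_inv_mul]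
  exact (((isLittleO_pow_pow_atTop_of_lt hab).comp_tendsto
    tendsto_natCast_atTop_atTop).const_mul_left _).const_mul_right (inv_ne_zero (by positivity))

theorem isEquivalent_cauchyProduct_pow_div_factorial {f g : ℕ → ℝ} {s t : ℕ}
    (hf : f ~[atTop] fun n => (n : ℝ) ^ s / s.factorial)
    (hg : g ~[atTop] fun n => (n : ℝ) ^ t / t.factorial) :
    cauchyProduct f g ~[atTop] fun n => (n : ℝ) ^ (s + t + 1) / (s + t + 1).factorial := by
  have hpos (k i : ℕ) : 0 < ((k + i).choose k : ℝ) := by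
    exact_mod_cast Nat.choose_pos (Nat.le_add_right k i)
  have hmono (k : ℕ) : Monotone fun i : ℕ => ((k + i).choose k : ℝ) := fun i j hij =>
    Nat.cast_le.2 <| Nat.choose_le_choose k (Nat.add_le_add_left hij k)
  have hC := isEquivalent_choose_add (s + t + 1) (s + t + 1)
  rw [← cauchyProduct_choose_add] at hC
  have hsmall (k : ℕ) (hk : k < s + t + 1) :=
    (isEquivalent_choose_add k k).trans_isLittleO
      ((isLittleO_pow_div_factorial hk).trans_isEquivalent hC.symm)
  exact ((hf.trans (isEquivalent_choose_add s s).symm).cauchyProduct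
    (hg.trans (isEquivalent_choose_add t t).symm) (hpos s) (hpos t) (hmono s) (hmono t)
    (hsmall s (by omega)) (hsmall t (by omega))).trans hC

theorem cauchyProduct_const_mul_geom (c d q : ℝ) (f g : ℕ → ℝ) :
    cauchyProduct (fun i => c * q ^ i * f i) (fun j => d * q ^ j * g j) =
      fun n => c * d * q ^ n * cauchyProduct f g n := by
  funext n
  rw [cauchyProduct, cauchyProduct, mul_sum]
  refine sum_congr rfl fun i hi => ?_
  rw [← pow_mul_pow_sub q (Nat.lt_succ_iff.mp (mem_range.mp hi))]
  ring

theorem isEquivalent_cauchyProduct_geom_mul_pow {f g : ℕ → ℝ} {c d q : ℝ} {s t : ℕ}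
    (hc : c ≠ 0) (hd : d ≠ 0) (hq : q ≠ 0)
    (hf : f ~[atTop] fun n => c * q ^ n * (n : ℝ) ^ s)
    (hg : g ~[atTop] fun n => d * q ^ n * (n : ℝ) ^ t) :
    cauchyProduct f g ~[atTop] fun n => c * d * s.factorial * t.factorial /
      (s + t + 1).factorial * q ^ n * (n : ℝ) ^ (s + t + 1) := by
  have normalize {h : ℕ → ℝ} {e : ℝ} {k : ℕ} (he : e ≠ 0)
      (hh : h ~[atTop] fun n => e * q ^ n * (n : ℝ) ^ k) :
      (fun n => h n / (e * k.factorial * q ^ n)) ~[atTop] fun n => (n : ℝ) ^ k / k.factorial :=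
    (hh.div IsEquivalent.refl).congr_right (Eventually.of_forall fun n => by
      simp only [Pi.div_apply]; field_simp)
  have hunfold {h : ℕ → ℝ} {e : ℝ} {k : ℕ} (he : e ≠ 0) :
      h = fun n => e * k.factorial * q ^ n * (h n / (e * k.factorial * q ^ n)) :=
    funext fun n => by field_simp
  rw [hunfold (h := f) (k := s) hc, hunfold (h := g) (k := t) hd, cauchyProduct_const_mul_geom]
  refine (IsEquivalent.refl.mul (isEquivalent_cauchyProduct_pow_div_factorial
    (normalize hc hf) (normalize hd hg))).congr_right (Eventually.of_forall fun n => ?_)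
  simp only [Pi.mul_apply]
  ring

theorem stmt8_general (q : ℝ) (hq : 1 < q) (rV rW : ℕ) (hrV : 1 ≤ rV) (hrW : 1 ≤ rW)
    (cV cW : ℝ) (hcV : 0 < cV) (hcW : 0 < cW)
    (a b : ℕ → ℝ)
    (ha : Tendsto (fun i : ℕ => a i / (cV * q ^ i * (i : ℝ) ^ (rV - 1))) atTop (nhds 1))
    (hb : Tendsto (fun i : ℕ => b i / (cW * q ^ i * (i : ℝ) ^ (rW - 1))) atTop (nhds 1)) :
    Tendsto (fun M : ℕ =>
        (∑ i ∈ Finset.range (M + 1), a i * b (M - i)) /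
          (cV * cW * ((rV - 1).factorial : ℝ) * ((rW - 1).factorial : ℝ) /
              ((rV + rW - 1).factorial : ℝ) * q ^ M * (M : ℝ) ^ (rV + rW - 1)))
      atTop (nhds 1) := by
  have hq0 : 0 < q := zero_lt_one.trans hq
  obtain ⟨s, rfl⟩ := Nat.exists_eq_add_of_le' hrV
  obtain ⟨t, rfl⟩ := Nat.exists_eq_add_of_le' hrW
  simp only [Nat.add_sub_cancel, show s + 1 + (t + 1) - 1 = s + t + 1 by omega] at ha hb ⊢
  have hconv := isEquivalent_cauchyProduct_geom_mul_pow hcV.ne' hcW.ne' hq0.ne'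
    (isEquivalent_of_tendsto_one (u := a) ha) (isEquivalent_of_tendsto_one (u := b) hb)
  refine (isEquivalent_iff_tendsto_one ?_).1 hconv
  filter_upwards [eventually_gt_atTop 0] with M hM
  positivity

/-- The convolution asymptotic behind Theorem 3.4: if `a_i ~ c_V q^i i^{r_V-1}` and
`b_i ~ c_W q^i i^{r_W-1}`, then
`∑_{i=0}^M a_i b_{M-i} ~ (c_V c_W (r_V-1)!(r_W-1)!/(r_V+r_W-1)!) q^M M^{r_V+r_W-1}`. -/
theorem stmt8 (q : ℝ) (hq : 1 < q) (rV rW : ℕ) (hrV : 1 ≤ rV) (hrW : 1 ≤ rW)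
    (cV cW : ℝ) (hcV : 0 < cV) (hcW : 0 < cW)
    (a b : ℕ → ℝ) (ha0 : ∀ i, 0 ≤ a i) (hb0 : ∀ i, 0 ≤ b i)
    (ha : Tendsto (fun i : ℕ => a i / (cV * q ^ i * (i : ℝ) ^ (rV - 1))) atTop (nhds 1))
    (hb : Tendsto (fun i : ℕ => b i / (cW * q ^ i * (i : ℝ) ^ (rW - 1))) atTop (nhds 1)) :
    Tendsto (fun M : ℕ =>
        (∑ i ∈ Finset.range (M + 1), a i * b (M - i)) /
          (cV * cW * ((rV - 1).factorial : ℝ) * ((rW - 1).factorial : ℝ) /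
              ((rV + rW - 1).factorial : ℝ) * q ^ M * (M : ℝ) ^ (rV + rW - 1)))
      atTop (nhds 1) :=
  stmt8_general q hq rV rW hrV hrW cV cW hcV hcW a b ha hb
end

section
/- Let $q > 1$, $c_V, c_2 > 0$ be reals and let $m \ge 3$, $k \ge 1$ be integers with $m \ge 2k$. Then $\sum_{i=0}^M q^{i/2}\, i^{m-2k-1} (M-i)^{2k-1} = O\left(q^{M/2} M^{m-3}\right)$ as $M \to \infty$; more precisely, expanding $(M-i)^{2k-1}$ by the binomial theorem and using $\sum_{i=0}^M q^{i/2} i^r = \left(\frac{2}{\log q} + \frac12\right) q^{M/2} M^r + O(q^{M/2} M^{r-1})$, the coefficient of $q^{M/2} M^{m-2}$ in the resulting expansion is $\left(\frac{2}{\log q} + \frac12\right)\sum_{j=0}^{2k-1}\binom{2k-1}{j}(-1)^j = 0$. -/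
open Finset Filter Asymptotics

/-- The cancellation step for `k` conjugacy cycles of length 2 in the proof of Theorem 5.5:
`∑_{i=0}^M q^{i/2} i^{m-2k-1} (M-i)^{2k-1} = O(q^{M/2} M^{m-3})`, the leading terms
cancelling because `(2/log q + 1/2) ∑_{j=0}^{2k-1} C(2k-1,j)(-1)^j = 0`. -/
theorem stmt16 (q : ℝ) (hq : 1 < q) (cV c2 : ℝ) (hcV : 0 < cV) (hc2 : 0 < c2)
    (m k : ℕ) (hm : 3 ≤ m) (hk : 1 ≤ k) (hmk : 2 * k ≤ m) :
    ((fun M : ℕ => ∑ i ∈ Finset.range (M + 1),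
        q ^ ((i : ℝ) / 2) * (i : ℝ) ^ (m - 2 * k - 1) * ((M : ℝ) - i) ^ (2 * k - 1))
      =O[atTop] (fun M : ℕ => q ^ ((M : ℝ) / 2) * (M : ℝ) ^ (m - 3))) ∧
    (2 / Real.log q + 1 / 2) *
      ∑ j ∈ Finset.range (2 * k), ((2 * k - 1).choose j : ℝ) * (-1) ^ j = 0 := by
  have hq0 : (0:ℝ) < q := lt_trans zero_lt_one hq
  constructor
  · set a := m - 2 * k - 1 with ha
    set b := 2 * k - 1 with hb
    set r := q ^ (-(1:ℝ)/2) with hr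
    have hr0 : 0 < r := Real.rpow_pos_of_pos hq0 _
    have hr1 : r < 1 := Real.rpow_lt_one_of_one_lt_of_neg hq (by norm_num)
    have hsum : Summable (fun j : ℕ => (j:ℝ)^b * r^j) := by
      simpa [mul_comm] using summable_pow_mul_geometric_of_norm_lt_one (R := ℝ) b
        (r := r) (by rw [Real.norm_eq_abs, abs_of_pos hr0]; exact hr1)
    set C := ∑' j:ℕ, (j:ℝ)^b * r^j with hC
    have hCnn : 0 ≤ C := tsum_nonneg (fun j => by positivity)
    rw [isBigO_iff]
    refine ⟨C, ?_⟩
    filter_upwards [eventually_ge_atTop 1] with M hM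
    have hM1 : (1:ℝ) ≤ (M:ℝ) := by exact_mod_cast hM
    -- each term is nonnegative
    have hterm : ∀ i ∈ Finset.range (M+1),
        0 ≤ q ^ ((i:ℝ)/2) * (i:ℝ)^a * ((M:ℝ)-i)^b := by
      intro i hi
      have hi' : i ≤ M := Nat.lt_succ_iff.mp (Finset.mem_range.mp hi)
      have : (0:ℝ) ≤ (M:ℝ) - i := by
        have : (i:ℝ) ≤ M := by exact_mod_cast hi'
        linarith
      positivity
    have habs : |∑ i ∈ Finset.range (M+1),
        q ^ ((i:ℝ)/2) * (i:ℝ)^a * ((M:ℝ)-i)^b|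
        = ∑ i ∈ Finset.range (M+1), q ^ ((i:ℝ)/2) * (i:ℝ)^a * ((M:ℝ)-i)^b :=
      abs_of_nonneg (Finset.sum_nonneg hterm)
    -- bound i^a by M^a
    have step1 : ∑ i ∈ Finset.range (M+1), q ^ ((i:ℝ)/2) * (i:ℝ)^a * ((M:ℝ)-i)^b
        ≤ (M:ℝ)^a * ∑ i ∈ Finset.range (M+1), q ^ ((i:ℝ)/2) * ((M:ℝ)-i)^b := by
      rw [Finset.mul_sum]
      apply Finset.sum_le_sum
      intro i hi
      have hi' : i ≤ M := Nat.lt_succ_iff.mp (Finset.mem_range.mp hi)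
      have hiM : (i:ℝ) ≤ M := by exact_mod_cast hi'
      have h1 : (i:ℝ)^a ≤ (M:ℝ)^a :=
        pow_le_pow_left₀ (by positivity) hiM a
      have h2 : (0:ℝ) ≤ q ^ ((i:ℝ)/2) := by positivity
      have h3 : (0:ℝ) ≤ ((M:ℝ)-i)^b := by
        have : (0:ℝ) ≤ (M:ℝ) - i := by linarith
        positivity
      calc q ^ ((i:ℝ)/2) * (i:ℝ)^a * ((M:ℝ)-i)^b
          ≤ q ^ ((i:ℝ)/2) * (M:ℝ)^a * ((M:ℝ)-i)^b := by
            apply mul_le_mul_of_nonneg_right _ h3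
            exact mul_le_mul_of_nonneg_left h1 h2
        _ = (M:ℝ)^a * (q ^ ((i:ℝ)/2) * ((M:ℝ)-i)^b) := by ring
    -- reflect the inner sum
    have step2 : ∑ i ∈ Finset.range (M+1), q ^ ((i:ℝ)/2) * ((M:ℝ)-i)^b
        = q ^ ((M:ℝ)/2) * ∑ j ∈ Finset.range (M+1), (j:ℝ)^b * r^j := by
      rw [← Finset.sum_range_reflect
        (fun i => q ^ ((i:ℝ)/2) * ((M:ℝ)-i)^b) (M+1)]
      rw [Finset.mul_sum]
      apply Finset.sum_congr rfl
      intro j hj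
      have hj' : j ≤ M := Nat.lt_succ_iff.mp (Finset.mem_range.mp hj)
      have hcast : ((M + 1 - 1 - j : ℕ) : ℝ) = (M:ℝ) - j := by
        have : M + 1 - 1 - j = M - j := by omega
        rw [this, Nat.cast_sub hj']
      rw [hcast]
      have hpow : q ^ (((M:ℝ) - j)/2) = q ^ ((M:ℝ)/2) * r^j := by
        rw [hr, ← Real.rpow_natCast (q ^ (-(1:ℝ)/2)) j,
          ← Real.rpow_mul (le_of_lt hq0), ← Real.rpow_add hq0]
        ring_nf
      rw [hpow]
      ring
    -- the inner sum is bounded by C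
    have step3 : ∑ j ∈ Finset.range (M+1), (j:ℝ)^b * r^j ≤ C :=
      Summable.sum_le_tsum _ (fun j _ => by positivity) hsum
    have hMa : (M:ℝ)^a ≤ (M:ℝ)^(m-3) := by
      apply pow_le_pow_right₀ hM1
      omega
    have hqM : (0:ℝ) ≤ q ^ ((M:ℝ)/2) := by positivity
    have hrhs : |q ^ ((M:ℝ)/2) * (M:ℝ)^(m-3)| = q ^ ((M:ℝ)/2) * (M:ℝ)^(m-3) := by
      apply abs_of_nonneg; positivity
    rw [Real.norm_eq_abs, Real.norm_eq_abs, habs, hrhs]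
    calc ∑ i ∈ Finset.range (M+1), q ^ ((i:ℝ)/2) * (i:ℝ)^a * ((M:ℝ)-i)^b
        ≤ (M:ℝ)^a * (q ^ ((M:ℝ)/2) * ∑ j ∈ Finset.range (M+1), (j:ℝ)^b * r^j) := by
          rw [← step2]; exact step1
      _ ≤ (M:ℝ)^(m-3) * (q ^ ((M:ℝ)/2) * C) := by
          apply mul_le_mul hMa (mul_le_mul_of_nonneg_left step3 hqM)
            (by positivity) (by positivity)
      _ = C * (q ^ ((M:ℝ)/2) * (M:ℝ)^(m-3)) := by ring
  · have h2k : 2 * k = (2 * k - 1) + 1 := by omega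
    have hz : ∑ j ∈ Finset.range (2 * k), ((2 * k - 1).choose j : ℝ) * (-1) ^ j = 0 := by
      have := Int.alternating_sum_range_choose (n := 2 * k - 1)
      rw [if_neg (by omega : ¬ 2 * k - 1 = 0)] at this
      calc ∑ j ∈ Finset.range (2 * k), ((2 * k - 1).choose j : ℝ) * (-1) ^ j
          = ((∑ j ∈ Finset.range ((2*k-1)+1), (-1) ^ j * ((2 * k - 1).choose j) : ℤ) : ℝ) := by
            rw [← h2k]; push_cast; apply Finset.sum_congr rfl; intro j _; ring
        _ = 0 := by rw [this]; norm_num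
    rw [hz, mul_zero]
end

section
/- Let $q > 1$ be real, $g \ge 1$ integer, and $S > 0$. Let $(a_N)_{N \ge 0}$ be nonnegative reals satisfying $a_N = S q^{3N} + O(q^{(N+g)(1+\varepsilon)})$ for $N \ge 2g - 1$ (some fixed $0 < \varepsilon \le 1/4$) and $a_N \ll q^{N(2+\varepsilon)}$ for $N < 2g-1$. Then for $M \ge 2(2g-1)$, $\frac{1}{2}\sum_{N=0}^M a_N a_{M-N} = \frac{S^2}{2} q^{3M} M + O(q^{3M})$, with implied constant independent of $M$. -/
open Finset

set_option maxHeartbeats 1000000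

lemma aux_geom_sum_le {r : ℝ} (h0 : 0 ≤ r) (h1 : r < 1) (t : Finset ℕ) :
    ∑ n ∈ t, r ^ n ≤ (1 - r)⁻¹ := by
  calc ∑ n ∈ t, r ^ n ≤ ∑' n : ℕ, r ^ n :=
        Summable.sum_le_tsum t (fun i _ => by positivity) (summable_geometric_of_lt_one h0 h1)
    _ = (1 - r)⁻¹ := tsum_geometric_of_lt_one h0 h1

lemma aux_mul_pow_bdd {r : ℝ} (h0 : 0 ≤ r) (h1 : r < 1) :
    ∃ K : ℝ, 0 ≤ K ∧ ∀ n : ℕ, ((n : ℝ) + 1) * r ^ n ≤ K := by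
  have hsum : Summable (fun n : ℕ => ((n : ℝ) + 1) * r ^ n) := by
    have h1' : Summable (fun n : ℕ => (n : ℝ) * r ^ n) := by
      have := summable_pow_mul_geometric_of_norm_lt_one (R := ℝ) 1
        (by rwa [Real.norm_eq_abs, abs_of_nonneg h0] : ‖r‖ < 1)
      simpa using this
    simpa [add_mul] using h1'.add (summable_geometric_of_lt_one h0 h1)
  refine ⟨∑' n : ℕ, ((n : ℝ) + 1) * r ^ n,
    tsum_nonneg (fun n : ℕ => by positivity), fun n => ?_⟩
  exact Summable.le_tsum hsum n (fun m _ => by positivity)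

/-- The abstract convolution estimate behind the first part of Theorem 2.1: if the
nonnegative sequence `a` satisfies the Thunder–Widmer bounds
`a_N = S q^{3N} + O(q^{(N+g)(1+ε)})` for `N ≥ 2g-1` and `a_N ≪ q^{N(2+ε)}` for `N < 2g-1`,
then for `M ≥ 2(2g-1)`, `(1/2) ∑_{N=0}^M a_N a_{M-N} = (S²/2) q^{3M} M + O(q^{3M})`. -/
theorem stmt18 (q : ℝ) (hq : 1 < q) (g : ℕ) (hg : 1 ≤ g) (S : ℝ) (hS : 0 < S)
    (ε : ℝ) (hε0 : 0 < ε) (hε : ε ≤ 1 / 4)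
    (a : ℕ → ℝ) (ha0 : ∀ N, 0 ≤ a N)
    (C₁ : ℝ)
    (hC₁ : ∀ N : ℕ, 2 * g - 1 ≤ N →
      |a N - S * q ^ (3 * N)| ≤ C₁ * q ^ (((N : ℝ) + g) * (1 + ε)))
    (C₂ : ℝ) (hC₂ : ∀ N : ℕ, N < 2 * g - 1 → a N ≤ C₂ * q ^ ((N : ℝ) * (2 + ε))) :
    ∃ C : ℝ, ∀ M : ℕ, 2 * (2 * g - 1) ≤ M →
      |(1 / 2) * ∑ N ∈ Finset.range (M + 1), a N * a (M - N) -
          S ^ 2 / 2 * q ^ (3 * M) * (M : ℝ)| ≤ C * q ^ (3 * M) := by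
  have hq0 : (0 : ℝ) < q := lt_trans one_pos hq
  set k : ℕ := 2 * g - 1 with hkdef
  have hk1 : 1 ≤ k := by omega
  have hkR : (k : ℝ) = 2 * (g : ℝ) - 1 := by
    have : (k : ℝ) = ((2 * g - 1 : ℕ) : ℝ) := by rw [hkdef]
    rw [this, Nat.cast_sub (by omega)]; push_cast; ring
  -- nonnegativity of the constants
  have hC₁0 : 0 ≤ C₁ := by
    have h := hC₁ k le_rfl
    have hx : (0 : ℝ) < q ^ (((k : ℝ) + g) * (1 + ε)) := Real.rpow_pos_of_pos hq0 _
    nlinarith [abs_nonneg (a k - S * q ^ (3 * k))]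
  have hC₂0 : 0 ≤ C₂ := by
    have h := hC₂ 0 (by omega)
    have hx : (0 : ℝ) < q ^ (((0 : ℕ) : ℝ) * (2 + ε)) := Real.rpow_pos_of_pos hq0 _
    nlinarith [ha0 0]
  -- the geometric ratio
  set s : ℝ := q ^ (-(7 : ℝ) / 4) with hsdef
  have hs0 : 0 < s := Real.rpow_pos_of_pos hq0 _
  have hs1 : s < 1 := Real.rpow_lt_one_of_one_lt_of_neg hq (by norm_num)
  set G : ℝ := (1 - s)⁻¹ with hGdef
  have hG0 : 0 ≤ G := by
    have : 0 < 1 - s := by linarith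
    positivity
  obtain ⟨K, hK0, hK⟩ := aux_mul_pow_bdd hs0.le hs1
  set Qg : ℝ := q ^ ((g : ℝ) * (1 + ε)) with hQgdef
  have hQg0 : 0 < Qg := Real.rpow_pos_of_pos hq0 _
  set Q5 : ℝ := q ^ ((5 : ℝ) / 2 * (g : ℝ)) with hQ5def
  have hQ50 : 0 < Q5 := Real.rpow_pos_of_pos hq0 _
  -- the constant
  refine ⟨2 * S * C₁ * Qg * G + C₁ ^ 2 * Q5 * K + 2 * (k : ℝ) * (S * C₂ + C₁ * C₂)
    + 2 * (k : ℝ) * S ^ 2, fun M hM => ?_⟩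
  have hMk : 2 * k ≤ M := hM
  have hMR : 2 * ((2 : ℝ) * g - 1) ≤ M := by
    calc 2 * ((2 : ℝ) * g - 1) = ((2 * (2 * g - 1) : ℕ) : ℝ) := by
          rw [Nat.cast_mul, Nat.cast_sub (by omega)]; push_cast; ring
      _ ≤ M := Nat.cast_le.mpr hM
  have hrpow_le : ∀ x y : ℝ, x ≤ y → q ^ x ≤ q ^ y :=
    fun x y h => Real.rpow_le_rpow_of_exponent_le hq.le h
  have hnpow : ∀ n : ℕ, (q : ℝ) ^ n = q ^ ((n : ℕ) : ℝ) :=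
    fun n => (Real.rpow_natCast q n).symm
  have hspow : ∀ n : ℕ, s ^ n = q ^ (-(7 : ℝ) / 4 * n) := by
    intro n
    rw [hsdef, ← Real.rpow_natCast (q ^ (-(7 : ℝ) / 4)) n, ← Real.rpow_mul hq0.le]
  have hgood : ∀ N : ℕ, k ≤ N →
      a N ≤ S * q ^ (3 * N) + C₁ * q ^ (((N : ℝ) + g) * (1 + ε)) := by
    intro N hN
    have := (abs_le.mp (hC₁ N hN)).2
    linarith
  -- key exponential estimate for the cross terms
  have key : ∀ A B : ℕ, A + B = M →
      q ^ (((A : ℝ) + g) * (1 + ε)) * q ^ (3 * B) ≤ q ^ (3 * M) * Qg * s ^ A := by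
    intro A B hAB
    have hAB' : (A : ℝ) + B = M := by exact_mod_cast hAB
    rw [hnpow (3 * B), hnpow (3 * M), hspow A, hQgdef,
      ← Real.rpow_add hq0, ← Real.rpow_add hq0, ← Real.rpow_add hq0]
    apply hrpow_le
    push_cast
    nlinarith [mul_nonneg (Nat.cast_nonneg A : (0 : ℝ) ≤ A) (by linarith : (0 : ℝ) ≤ 1 / 4 - ε)]
  -- product of two error terms
  have keyD : ∀ A B : ℕ, A + B = M →
      q ^ (((A : ℝ) + g) * (1 + ε)) * q ^ (((B : ℝ) + g) * (1 + ε))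
        = q ^ (((M : ℝ) + 2 * g) * (1 + ε)) := by
    intro A B hAB
    have hAB' : (A : ℝ) + B = M := by exact_mod_cast hAB
    rw [← Real.rpow_add hq0]
    congr 1
    nlinarith [hAB']
  -- boundary estimate
  have hbdry : ∀ A B : ℕ, A + B = M → B < k →
      a A * a B ≤ (S * C₂ + C₁ * C₂) * q ^ (3 * M) := by
    intro A B hAB hB
    have hAB' : (A : ℝ) + B = M := by exact_mod_cast hAB
    have hBR : (B : ℝ) ≤ 2 * (g : ℝ) - 2 := by
      have : (B : ℝ) ≤ (k : ℝ) - 1 := by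
        have : ((B : ℕ) : ℝ) + 1 ≤ k := by exact_mod_cast hB
        linarith
      rw [hkR] at this; linarith
    have hA : a A ≤ S * q ^ (3 * A) + C₁ * q ^ (((A : ℝ) + g) * (1 + ε)) :=
      hgood A (by omega)
    have hBb : a B ≤ C₂ * q ^ ((B : ℝ) * (2 + ε)) := hC₂ B hB
    have e1 : q ^ (3 * A) * q ^ ((B : ℝ) * (2 + ε)) ≤ q ^ (3 * M) := by
      rw [hnpow (3 * A), hnpow (3 * M), ← Real.rpow_add hq0]
      apply hrpow_le
      have hb : (0 : ℝ) ≤ (B : ℝ) * (1 - ε) :=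
        mul_nonneg (Nat.cast_nonneg B) (by linarith)
      push_cast
      nlinarith [hb, hAB']
    have e2 : q ^ (((A : ℝ) + g) * (1 + ε)) * q ^ ((B : ℝ) * (2 + ε)) ≤ q ^ (3 * M) := by
      rw [hnpow (3 * M), ← Real.rpow_add hq0]
      apply hrpow_le
      have hABe : (A : ℝ) * ε + (B : ℝ) * ε = (M : ℝ) * ε := by rw [← add_mul, hAB']
      have p1 : (M : ℝ) * ε ≤ (M : ℝ) * (1 / 4) :=
        mul_le_mul_of_nonneg_left hε (Nat.cast_nonneg M)
      have p2 : (g : ℝ) * ε ≤ (g : ℝ) * (1 / 4) :=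
        mul_le_mul_of_nonneg_left hε (Nat.cast_nonneg g)
      have hgR : (1 : ℝ) ≤ (g : ℝ) := by exact_mod_cast hg
      push_cast
      nlinarith [hABe, p1, p2, hBR, hMR, hgR, hAB']
    have h1 : a A * a B ≤ (S * q ^ (3 * A) + C₁ * q ^ (((A : ℝ) + g) * (1 + ε)))
        * (C₂ * q ^ ((B : ℝ) * (2 + ε))) := by
      apply mul_le_mul hA hBb (ha0 B) _
      have : (0 : ℝ) < q ^ (3 * A) := by positivity
      have : (0 : ℝ) < q ^ (((A : ℝ) + g) * (1 + ε)) := Real.rpow_pos_of_pos hq0 _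
      nlinarith
    calc a A * a B ≤ (S * q ^ (3 * A) + C₁ * q ^ (((A : ℝ) + g) * (1 + ε)))
          * (C₂ * q ^ ((B : ℝ) * (2 + ε))) := h1
      _ = S * C₂ * (q ^ (3 * A) * q ^ ((B : ℝ) * (2 + ε)))
          + C₁ * C₂ * (q ^ (((A : ℝ) + g) * (1 + ε)) * q ^ ((B : ℝ) * (2 + ε))) := by ring
      _ ≤ S * C₂ * q ^ (3 * M) + C₁ * C₂ * q ^ (3 * M) := by
          have u1 := mul_le_mul_of_nonneg_left e1 (mul_nonneg hS.le hC₂0)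
          have u2 := mul_le_mul_of_nonneg_left e2 (mul_nonneg hC₁0 hC₂0)
          linarith
      _ = (S * C₂ + C₁ * C₂) * q ^ (3 * M) := by ring
  -- middle estimate
  have hmid : ∀ N ∈ Finset.Ico k (M - k + 1),
      |a N * a (M - N) - S ^ 2 * q ^ (3 * M)|
        ≤ S * C₁ * Qg * q ^ (3 * M) * (s ^ N + s ^ (M - N))
          + C₁ ^ 2 * q ^ (((M : ℝ) + 2 * g) * (1 + ε)) := by
    intro N hN
    rw [Finset.mem_Ico] at hN
    obtain ⟨hNk, hNM⟩ := hN
    have hNle : N ≤ M - k := by omega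
    have hNM' : N ≤ M := by omega
    have hMNk : k ≤ M - N := by omega
    have hAB : N + (M - N) = M := by omega
    have hpow : q ^ (3 * N) * q ^ (3 * (M - N)) = q ^ (3 * M) := by
      rw [← pow_add]; congr 1; omega
    have hid : a N * a (M - N) - S ^ 2 * q ^ (3 * M)
        = (a N - S * q ^ (3 * N)) * a (M - N)
          + (S * q ^ (3 * N)) * (a (M - N) - S * q ^ (3 * (M - N))) := by
      rw [← hpow]; ring
    have h1 := hC₁ N hNk
    have h2 := hC₁ (M - N) hMNk
    have hg2 := hgood (M - N) hMNk
    have hq3N : (0 : ℝ) ≤ q ^ (3 * N) := by positivity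
    calc |a N * a (M - N) - S ^ 2 * q ^ (3 * M)|
        ≤ |a N - S * q ^ (3 * N)| * a (M - N)
          + (S * q ^ (3 * N)) * |a (M - N) - S * q ^ (3 * (M - N))| := by
          rw [hid]
          refine le_trans (abs_add_le _ _) ?_
          rw [abs_mul, abs_mul, abs_of_nonneg (ha0 (M - N)),
            abs_of_nonneg (by positivity : (0:ℝ) ≤ S * q ^ (3 * N))]
      _ ≤ (C₁ * q ^ (((N : ℝ) + g) * (1 + ε)))
            * (S * q ^ (3 * (M - N)) + C₁ * q ^ ((((M - N : ℕ) : ℝ) + g) * (1 + ε)))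
          + (S * q ^ (3 * N)) * (C₁ * q ^ ((((M - N : ℕ) : ℝ) + g) * (1 + ε))) := by
          have t1 : |a N - S * q ^ (3 * N)| * a (M - N)
              ≤ (C₁ * q ^ (((N : ℝ) + g) * (1 + ε)))
                * (S * q ^ (3 * (M - N)) + C₁ * q ^ ((((M - N : ℕ) : ℝ) + g) * (1 + ε))) :=
            mul_le_mul h1 hg2 (ha0 _) (le_trans (abs_nonneg _) h1)
          have t2 : (S * q ^ (3 * N)) * |a (M - N) - S * q ^ (3 * (M - N))|
              ≤ (S * q ^ (3 * N)) * (C₁ * q ^ ((((M - N : ℕ) : ℝ) + g) * (1 + ε))) :=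
            mul_le_mul_of_nonneg_left h2 (by positivity)
          linarith
      _ = S * C₁ * (q ^ (((N : ℝ) + g) * (1 + ε)) * q ^ (3 * (M - N)))
          + S * C₁ * (q ^ ((((M - N : ℕ) : ℝ) + g) * (1 + ε)) * q ^ (3 * N))
          + C₁ ^ 2 * (q ^ (((N : ℝ) + g) * (1 + ε))
            * q ^ ((((M - N : ℕ) : ℝ) + g) * (1 + ε))) := by ring
      _ ≤ S * C₁ * (q ^ (3 * M) * Qg * s ^ N)
          + S * C₁ * (q ^ (3 * M) * Qg * s ^ (M - N))
          + C₁ ^ 2 * q ^ (((M : ℝ) + 2 * g) * (1 + ε)) := by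
          have k1 := mul_le_mul_of_nonneg_left (key N (M - N) hAB) (mul_nonneg hS.le hC₁0)
          have k2 := mul_le_mul_of_nonneg_left (key (M - N) N (by omega : (M - N) + N = M))
            (mul_nonneg hS.le hC₁0)
          have k3 := (keyD N (M - N) hAB).le
          have k3' := mul_le_mul_of_nonneg_left k3 (by positivity : (0:ℝ) ≤ C₁ ^ 2)
          linarith
      _ = S * C₁ * Qg * q ^ (3 * M) * (s ^ N + s ^ (M - N))
          + C₁ ^ 2 * q ^ (((M : ℝ) + 2 * g) * (1 + ε)) := by ring
  -- split the sum
  have hsplit : ∑ N ∈ Finset.range (M + 1), a N * a (M - N)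
      = (∑ N ∈ Finset.Ico 0 k, a N * a (M - N))
        + (∑ N ∈ Finset.Ico k (M - k + 1), a N * a (M - N))
        + (∑ N ∈ Finset.Ico (M - k + 1) (M + 1), a N * a (M - N)) := by
    rw [Finset.range_eq_Ico,
      ← Finset.sum_Ico_consecutive _ (by omega : 0 ≤ k) (by omega : k ≤ M + 1),
      ← Finset.sum_Ico_consecutive _ (by omega : k ≤ M - k + 1) (by omega : M - k + 1 ≤ M + 1)]
    ring
  set T1 : ℝ := ∑ N ∈ Finset.Ico 0 k, a N * a (M - N) with hT1
  set T2 : ℝ := ∑ N ∈ Finset.Ico k (M - k + 1), a N * a (M - N) with hT2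
  set T3 : ℝ := ∑ N ∈ Finset.Ico (M - k + 1) (M + 1), a N * a (M - N) with hT3
  have hP0 : (0 : ℝ) < q ^ (3 * M) := by positivity
  -- bound T1
  have hT1b : T1 ≤ (k : ℝ) * ((S * C₂ + C₁ * C₂) * q ^ (3 * M)) := by
    rw [hT1]
    calc ∑ N ∈ Finset.Ico 0 k, a N * a (M - N)
        ≤ ∑ N ∈ Finset.Ico 0 k, (S * C₂ + C₁ * C₂) * q ^ (3 * M) := by
          apply Finset.sum_le_sum
          intro N hN
          rw [Finset.mem_Ico] at hN
          rw [mul_comm]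
          exact hbdry (M - N) N (by omega) hN.2
      _ = (k : ℝ) * ((S * C₂ + C₁ * C₂) * q ^ (3 * M)) := by
          rw [Finset.sum_const, Nat.card_Ico, nsmul_eq_mul]; norm_num
  have hT1nn : 0 ≤ T1 := Finset.sum_nonneg fun N _ => mul_nonneg (ha0 N) (ha0 (M - N))
  -- bound T3
  have hT3b : T3 ≤ (k : ℝ) * ((S * C₂ + C₁ * C₂) * q ^ (3 * M)) := by
    rw [hT3]
    calc ∑ N ∈ Finset.Ico (M - k + 1) (M + 1), a N * a (M - N)
        ≤ ∑ N ∈ Finset.Ico (M - k + 1) (M + 1), (S * C₂ + C₁ * C₂) * q ^ (3 * M) := by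
          apply Finset.sum_le_sum
          intro N hN
          rw [Finset.mem_Ico] at hN
          exact hbdry N (M - N) (by omega) (by omega)
      _ = (k : ℝ) * ((S * C₂ + C₁ * C₂) * q ^ (3 * M)) := by
          rw [Finset.sum_const, Nat.card_Ico, nsmul_eq_mul]
          congr 2
          omega
  have hT3nn : 0 ≤ T3 := Finset.sum_nonneg fun N _ => mul_nonneg (ha0 N) (ha0 (M - N))
  -- bound the middle deviation
  have hcardmid : (Finset.Ico k (M - k + 1)).card = M - 2 * k + 1 := by
    rw [Nat.card_Ico]; omega
  have hmid2 : |T2 - ((M - 2 * k + 1 : ℕ) : ℝ) * (S ^ 2 * q ^ (3 * M))|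
      ≤ (2 * S * C₁ * Qg * G + C₁ ^ 2 * Q5 * K) * q ^ (3 * M) := by
    have hsum1 : T2 - ((M - 2 * k + 1 : ℕ) : ℝ) * (S ^ 2 * q ^ (3 * M))
        = ∑ N ∈ Finset.Ico k (M - k + 1), (a N * a (M - N) - S ^ 2 * q ^ (3 * M)) := by
      rw [Finset.sum_sub_distrib, Finset.sum_const, hcardmid, nsmul_eq_mul, hT2]
    rw [hsum1]
    refine le_trans (Finset.abs_sum_le_sum_abs _ _) ?_
    refine le_trans (Finset.sum_le_sum hmid) ?_
    rw [Finset.sum_add_distrib, ← Finset.mul_sum, Finset.sum_const, hcardmid, nsmul_eq_mul]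
    have hgs1 : ∑ N ∈ Finset.Ico k (M - k + 1), (s ^ N + s ^ (M - N)) ≤ 2 * G := by
      rw [Finset.sum_add_distrib]
      have hA : ∑ N ∈ Finset.Ico k (M - k + 1), s ^ N ≤ G :=
        aux_geom_sum_le hs0.le hs1 _
      have hB : ∑ N ∈ Finset.Ico k (M - k + 1), s ^ (M - N) ≤ G := by
        calc ∑ N ∈ Finset.Ico k (M - k + 1), s ^ (M - N)
            ≤ ∑ N ∈ Finset.range (M + 1), s ^ (M - N) := by
              apply Finset.sum_le_sum_of_subset_of_nonneg
              · intro x hx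
                rw [Finset.mem_Ico] at hx
                rw [Finset.mem_range]
                omega
              · intro i _ _
                positivity
          _ = ∑ N ∈ Finset.range (M + 1), s ^ N := by
              rw [← Finset.sum_range_reflect (fun j => s ^ j) (M + 1)]
              apply Finset.sum_congr rfl
              intro x hx
              rw [Finset.mem_range] at hx
              have hxe : M + 1 - 1 - x = M - x := by omega
              rw [hxe]
          _ ≤ G := aux_geom_sum_le hs0.le hs1 _
      linarith
    have hgs2 : ((M - 2 * k + 1 : ℕ) : ℝ) * (C₁ ^ 2 * q ^ (((M : ℝ) + 2 * g) * (1 + ε)))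
        ≤ C₁ ^ 2 * Q5 * K * q ^ (3 * M) := by
      have hcard_le : ((M - 2 * k + 1 : ℕ) : ℝ) ≤ (M : ℝ) + 1 := by
        have : M - 2 * k + 1 ≤ M + 1 := by omega
        exact_mod_cast this
      have hexp : q ^ (((M : ℝ) + 2 * g) * (1 + ε)) ≤ Q5 * s ^ M * q ^ (3 * M) := by
        rw [hQ5def, hspow M, hnpow (3 * M), ← Real.rpow_add hq0, ← Real.rpow_add hq0]
        apply hrpow_le
        push_cast
        nlinarith [Nat.cast_nonneg (α := ℝ) M, Nat.cast_nonneg (α := ℝ) g,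
          mul_nonneg (add_nonneg (Nat.cast_nonneg (α := ℝ) M)
            (by positivity : (0:ℝ) ≤ 2 * (g:ℝ))) (by linarith : (0 : ℝ) ≤ 1 / 4 - ε)]
      calc ((M - 2 * k + 1 : ℕ) : ℝ) * (C₁ ^ 2 * q ^ (((M : ℝ) + 2 * g) * (1 + ε)))
          ≤ ((M : ℝ) + 1) * (C₁ ^ 2 * (Q5 * s ^ M * q ^ (3 * M))) := by
            apply mul_le_mul hcard_le _ (by positivity) (by positivity)
            exact mul_le_mul_of_nonneg_left hexp (by positivity)
        _ = C₁ ^ 2 * Q5 * (((M : ℝ) + 1) * s ^ M) * q ^ (3 * M) := by ring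
        _ ≤ C₁ ^ 2 * Q5 * K * q ^ (3 * M) := by
            apply mul_le_mul_of_nonneg_right _ hP0.le
            exact mul_le_mul_of_nonneg_left (hK M) (by positivity)
    calc S * C₁ * Qg * q ^ (3 * M) * ∑ N ∈ Finset.Ico k (M - k + 1), (s ^ N + s ^ (M - N))
          + ((M - 2 * k + 1 : ℕ) : ℝ) * (C₁ ^ 2 * q ^ (((M : ℝ) + 2 * g) * (1 + ε)))
        ≤ S * C₁ * Qg * q ^ (3 * M) * (2 * G) + C₁ ^ 2 * Q5 * K * q ^ (3 * M) := by
          have := mul_le_mul_of_nonneg_left hgs1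
            (by positivity : (0:ℝ) ≤ S * C₁ * Qg * q ^ (3 * M))
          linarith
      _ = (2 * S * C₁ * Qg * G + C₁ ^ 2 * Q5 * K) * q ^ (3 * M) := by ring
  -- assemble
  have hMdecomp : (M : ℝ) = ((M - 2 * k + 1 : ℕ) : ℝ) + (2 * (k : ℝ) - 1) := by
    have h1 : ((M - 2 * k + 1 : ℕ) : ℝ) = (M : ℝ) - 2 * k + 1 := by
      rw [Nat.cast_add, Nat.cast_sub (by omega)]
      push_cast; ring
    rw [h1]; ring
  have hfinal : |T1 + T2 + T3 - S ^ 2 * q ^ (3 * M) * M|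
      ≤ (2 * (2 * S * C₁ * Qg * G + C₁ ^ 2 * Q5 * K + 2 * (k : ℝ) * (S * C₂ + C₁ * C₂)
        + 2 * (k : ℝ) * S ^ 2)) * q ^ (3 * M) := by
    have hdec : T1 + T2 + T3 - S ^ 2 * q ^ (3 * M) * M
        = (T2 - ((M - 2 * k + 1 : ℕ) : ℝ) * (S ^ 2 * q ^ (3 * M)))
          + T1 + T3 - (2 * (k : ℝ) - 1) * (S ^ 2 * q ^ (3 * M)) := by
      rw [hMdecomp]; ring
    rw [hdec]
    have habs := abs_le.mp hmid2
    have hk0 : (1 : ℝ) ≤ (k : ℝ) := by exact_mod_cast hk1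
    have hS2 : (0 : ℝ) ≤ S ^ 2 * q ^ (3 * M) := by positivity
    rw [abs_le]
    constructor
    · nlinarith [mul_nonneg (mul_nonneg hS.le hC₂0) hP0.le,
        mul_nonneg (mul_nonneg hC₁0 hC₂0) hP0.le]
    · nlinarith [mul_nonneg (mul_nonneg hS.le hC₂0) hP0.le,
        mul_nonneg (mul_nonneg hC₁0 hC₂0) hP0.le]
  rw [hsplit]
  have heq : 1 / 2 * (T1 + T2 + T3) - S ^ 2 / 2 * q ^ (3 * M) * M
      = 1 / 2 * (T1 + T2 + T3 - S ^ 2 * q ^ (3 * M) * M) := by ring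
  rw [heq, abs_mul, abs_of_nonneg (by norm_num : (0:ℝ) ≤ (1:ℝ)/2)]
  linarith [hfinal]
end
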